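/- Let R be the polynomial ring ℤ[a, b, c] in three variables (e.g. the multivariate polynomial ring over ℤ with three indeterminates a, b, c), and let Tλ1 and Tλ3 be the 8×8 matrices over R defined in the context. Then Tλ3 · Tλ1 ≠ Tλ1 · Tλ3; in particular, the monodromy matrices Tλ1 and Tλ3 do not commute (the (1,1) entry of Tλ3·Tλ1 equals a²b²c − abc, while that of Tλ1·Tλ3 equals 0). -/
import Mathlib


/-- The polynomial ring `ℤ[a, b, c]` in three indeterminates. -/
abbrev Rring : Type := MvPolynomial (Fin 3) ℤ

/-- The indeterminate `a`. -/
noncomputable def a : Rring := MvPolynomial.X 0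
/-- The indeterminate `b`. -/
noncomputable def b : Rring := MvPolynomial.X 1
/-- The indeterminate `c`. -/
noncomputable def c : Rring := MvPolynomial.X 2

/-- `M₁ v`: 8×8 matrix with first column `v`, remaining columns standard. -/
noncomputable def M1 (v : Fin 8 → Rring) : Matrix (Fin 8) (Fin 8) Rring :=
  Matrix.of fun i j => if j = 0 then v i else if i = j then 1 else 0

/-- `M₁₂ v w`: 8×8 matrix with first column `v`, second column `w`,
remaining columns standard. -/
noncomputable def M12 (v w : Fin 8 → Rring) : Matrix (Fin 8) (Fin 8) Rring :=
  Matrix.of fun i j => if j = 0 then v i else if j = 1 then w i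
    else if i = j then 1 else 0

/-- `Tλ₁` over `ℤ[a,b,c]`. -/
noncomputable def Tl1 : Matrix (Fin 8) (Fin 8) Rring :=
  M1 ![a*b*c, c - a*b*c, b - a*b*c, a - a*b*c,
       a*b*c - a*c, a*b*c - b*c, a*b*c - a*b, 0]

/-- `Tλ₃` over `ℤ[a,b,c]`. -/
noncomputable def Tl3 : Matrix (Fin 8) (Fin 8) Rring :=
  M12 ![0, -(a*b*c), b, a, a*b*c, a*b*c, -(a*b), -(a*b*c)]
      ![-(a*b), 0, a*b, a*b, a, b, -(a*b), -(a*b)]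

lemma h31 : (Tl3 * Tl1) 0 0 = a^2*b^2*c - a*b*c := by
  simp [Tl3, Tl1, M1, M12, Matrix.mul_apply, Fin.sum_univ_eight]
  ring

lemma h13 : (Tl1 * Tl3) 0 0 = 0 := by
  simp [Tl3, Tl1, M1, M12, Matrix.mul_apply, Fin.sum_univ_eight]

/-- over `ℤ[a,b,c]` the monodromy matrices `Tλ₁` and `Tλ₃` do
not commute: `Tλ₃ · Tλ₁ ≠ Tλ₁ · Tλ₃`; indeed the `(1,1)` entry of `Tλ₃·Tλ₁`
is `a²b²c − abc` while that of `Tλ1·Tλ₃` is `0`. -/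
theorem stmt10 :
    Tl3 * Tl1 ≠ Tl1 * Tl3 ∧
    (Tl3 * Tl1) 0 0 = a^2*b^2*c - a*b*c ∧
    (Tl1 * Tl3) 0 0 = 0 := by
  refine ⟨?_, h31, h13⟩
  intro h
  have he : a^2*b^2*c - a*b*c = (0 : Rring) := by rw [← h31, h, h13]
  have := congrArg (MvPolynomial.eval (fun _ => (2 : ℤ))) he
  simp [a, b, c] at this
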